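/- Let A be a commutative ℚ-algebra and let t, b ∈ A satisfy t·b⁹ = b − 1. Define h₁ = −b⁶, h₂ = (1/2)b³ − b⁴, h₃ = b³, h₄ = (1/2)(1 + b) − b², h₅ = −1 + b, h₆ = −(1/2)b⁷·t − b⁸·t, h₇ = b⁷·t, h₈ = b⁵·t. Then the eight equations hold: h₂ + (1/2)h₃ + t·h₁² = 0; h₄ + h₅ + t·h₁·h₂ = 0; h₅ + t·h₁·h₃ = 0; h₆ + h₇ − (1/2)t·h₁ + t·h₁·h₄ = 0; h₇ + t·h₁ + t·h₁·h₅ = 0; (1/2)h₈ + t·h₁ − (1/2)t·h₂ + (1/4)t·h₃ + t·h₁·h₆ = 0; h₈ + t·h₂ − (1/2)t·h₃ + t·h₁·h₇ = 0; −1 + h₃ + h₄ − (1/2)h₅ + h₁·h₈ = 0. -/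

import Mathlib

/-!
Substituting the definitions, each equation becomes a polynomial identity in `t`, `b` and
`c = 1/2` that holds modulo the relations `t * b ^ 9 = b - 1` and `2 * c = 1`; the coefficients
passed to `linear_combination` are the certificates of membership in that ideal.
-/

section HalfInQAlgebra

variable {A : Type*} [Semiring A] [Algebra ℚ A]

theorem two_mul_algebraMap_half : 2 * algebraMap ℚ A (1 / 2) = 1 := by
  rw [← map_ofNat (algebraMap ℚ A) 2, ← map_mul]
  norm_num

theorem algebraMap_quarter : algebraMap ℚ A (1 / 4) = algebraMap ℚ A (1 / 2) ^ 2 := by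
  rw [← map_pow]
  norm_num

end HalfInQAlgebra

/-- in a commutative `ℚ`-algebra, if `t·b⁹ = b − 1`, then the explicit
polynomials `h₁ = −b⁶`, `h₂ = (1/2)b³ − b⁴`, `h₃ = b³`, `h₄ = (1/2)(1+b) − b²`,
`h₅ = −1 + b`, `h₆ = −(1/2)b⁷t − b⁸t`, `h₇ = b⁷t`, `h₈ = b⁵t` satisfy the eight equations
of the nonlinear system (e:NL) of the local `(2,1)` flip. -/
theorem lambertSeries_solves_system {A : Type*} [CommRing A] [Algebra ℚ A]
    (t b : A) (hb : t * b ^ 9 = b - 1)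
    (h₁ h₂ h₃ h₄ h₅ h₆ h₇ h₈ : A)
    (d1 : h₁ = -b ^ 6)
    (d2 : h₂ = algebraMap ℚ A (1/2) * b ^ 3 - b ^ 4)
    (d3 : h₃ = b ^ 3)
    (d4 : h₄ = algebraMap ℚ A (1/2) * (1 + b) - b ^ 2)
    (d5 : h₅ = -1 + b)
    (d6 : h₆ = -(algebraMap ℚ A (1/2) * (b ^ 7 * t)) - b ^ 8 * t)
    (d7 : h₇ = b ^ 7 * t)
    (d8 : h₈ = b ^ 5 * t) :
    (h₂ + algebraMap ℚ A (1/2) * h₃ + t * h₁ ^ 2 = 0) ∧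
    (h₄ + h₅ + t * h₁ * h₂ = 0) ∧
    (h₅ + t * h₁ * h₃ = 0) ∧
    (h₆ + h₇ - algebraMap ℚ A (1/2) * (t * h₁) + t * h₁ * h₄ = 0) ∧
    (h₇ + t * h₁ + t * h₁ * h₅ = 0) ∧
    (algebraMap ℚ A (1/2) * h₈ + t * h₁ - algebraMap ℚ A (1/2) * (t * h₂)
       + algebraMap ℚ A (1/4) * (t * h₃) + t * h₁ * h₆ = 0) ∧
    (h₈ + t * h₂ - algebraMap ℚ A (1/2) * (t * h₃) + t * h₁ * h₇ = 0) ∧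
    (-1 + h₃ + h₄ - algebraMap ℚ A (1/2) * h₅ + h₁ * h₈ = 0) := by
  subst d1 d2 d3 d4 d5 d6 d7 d8
  rw [algebraMap_quarter]
  set c := algebraMap ℚ A (1 / 2)
  have hc : 2 * c = 1 := two_mul_algebraMap_half
  refine ⟨?_, ?_, ?_, ?_, ?_, ?_, ?_, ?_⟩
  · linear_combination b ^ 3 * hb + b ^ 3 * hc
  · linear_combination (b - c) * hb + hc
  · linear_combination -hb
  · linear_combination -(b ^ 7 * t) * hc
  · ring
  · linear_combination (c * t * b ^ 4 + t * b ^ 5) * hb + t * b ^ 5 * hc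
  · linear_combination -(t * b ^ 4) * hb
  · linear_combination -(b ^ 2) * hb + hc
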